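/- Assume p(x,y) > 0 for all x ∈ X and y ∈ Y. Then for any measurable function u with 0 ≤ u ≤ U (U : X → (0,∞) measurable), the following dichotomy holds: either Φ[u](x) = 0 for all x ∈ X, or Φ[u](x) > 0 for all x ∈ X. -/

import Mathlib

open MeasureTheory ENNReal Filter Topology

noncomputable section

/-- `Ψ[u](y) = ∫_X p(x',y) u(x')⁻¹ dμ(x')`. -/
def fortetPsi {X Y : Type*} [MeasurableSpace X]
    (p : X → Y → ℝ≥0∞) (μ : Measure X) (u : X → ℝ≥0∞) (y : Y) : ℝ≥0∞ :=
  ∫⁻ x, p x y * (u x)⁻¹ ∂μ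

/-- The Fortet mapping `Φ[u](x) = ∫_Y p(x,y) Ψ[u](y)⁻¹ dν(y)`. -/
def fortetPhi {X Y : Type*} [MeasurableSpace X] [MeasurableSpace Y]
    (p : X → Y → ℝ≥0∞) (μ : Measure X) (ν : Measure Y) (u : X → ℝ≥0∞) (x : X) : ℝ≥0∞ :=
  ∫⁻ y, p x y * (fortetPsi p μ u y)⁻¹ ∂ν

/-! Since `p(x, ·) > 0`, the integrand of `Φ[u](x)` vanishes exactly where `Ψ[u] = ∞`, so
`Φ[u](x) = 0` iff `Ψ[u] = ∞` holds `ν`-a.e., a condition that does not depend on `x`. -/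

theorem lintegral_mul_inv_eq_zero_iff {Y : Type*} [MeasurableSpace Y] {ν : Measure Y}
    {f g : Y → ℝ≥0∞} (hf : Measurable f) (hg : Measurable g) (hf_ne : ∀ y, f y ≠ 0) :
    ∫⁻ y, f y * (g y)⁻¹ ∂ν = 0 ↔ ν {y | g y ≠ ∞} = 0 := by
  rw [lintegral_eq_zero_iff (by fun_prop : Measurable fun y => f y * (g y)⁻¹),
    EventuallyEq, ae_iff]
  simp [hf_ne]

theorem measurable_fortetPsi {X Y : Type*} [MeasurableSpace X] [MeasurableSpace Y]
    {μ : Measure X} [SFinite μ] {p : X → Y → ℝ≥0∞} (hp : Measurable (Function.uncurry p))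
    {u : X → ℝ≥0∞} (hu : Measurable u) : Measurable (fortetPsi p μ u) :=
  (hp.mul (hu.comp measurable_fst).inv).lintegral_prod_left

theorem fortetPhi_eq_zero_iff {X Y : Type*} [MeasurableSpace X] [MeasurableSpace Y]
    {μ : Measure X} [SFinite μ] {ν : Measure Y} {p : X → Y → ℝ≥0∞}
    (hp : Measurable (Function.uncurry p)) (hp_ne : ∀ x y, p x y ≠ 0)
    {u : X → ℝ≥0∞} (hu : Measurable u) (x : X) :
    fortetPhi p μ ν u x = 0 ↔ ν {y | fortetPsi p μ u y ≠ ∞} = 0 :=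
  lintegral_mul_inv_eq_zero_iff hp.of_uncurry_left (measurable_fortetPsi hp hu) (hp_ne x)

theorem fortet_dichotomy_general
    {X Y : Type*} [MeasurableSpace X] [MeasurableSpace Y]
    (μ : Measure X) (ν : Measure Y)
    [IsProbabilityMeasure μ]
    (p : X → Y → ℝ≥0∞)
    (hp_meas : Measurable (Function.uncurry p))
    (hp_pos : ∀ x y, 0 < p x y)
    (u : X → ℝ≥0∞) (hu_meas : Measurable u) :
    (∀ x, fortetPhi p μ ν u x = 0) ∨ (∀ x, 0 < fortetPhi p μ ν u x) := by
  have hΦ_eq_zero := fortetPhi_eq_zero_iff (μ := μ) (ν := ν) hp_meas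
    (fun x y => (hp_pos x y).ne') hu_meas
  by_cases h : ν {y | fortetPsi p μ u y ≠ ∞} = 0
  · exact Or.inl fun x => (hΦ_eq_zero x).2 h
  · exact Or.inr fun x => pos_iff_ne_zero.2 (mt (hΦ_eq_zero x).1 h)

theorem fortet_dichotomy
    {X Y : Type*} [MeasurableSpace X] [MeasurableSpace Y]
    (μ : Measure X) (ν : Measure Y)
    [IsProbabilityMeasure μ] [IsProbabilityMeasure ν]
    (p : X → Y → ℝ≥0∞)
    (hp_meas : Measurable (Function.uncurry p))
    (hp_pos : ∀ x y, 0 < p x y)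
    (U : X → ℝ≥0∞) (hU_meas : Measurable U)
    (hU_pos : ∀ x, 0 < U x) (hU_fin : ∀ x, U x ≠ ∞)
    (u : X → ℝ≥0∞) (hu_meas : Measurable u) (hu_le : ∀ x, u x ≤ U x) :
    (∀ x, fortetPhi p μ ν u x = 0) ∨ (∀ x, 0 < fortetPhi p μ ν u x) :=
  fortet_dichotomy_general μ ν p hp_meas hp_pos u hu_meas

end
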